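/- Let \(v:\mathbb{R}^d\to[0,\infty)\) be bounded, measurable, compactly supported and not almost-everywhere zero, with \(d\ge 3\). Then the scattering energy satisfies the strict inequality \(b(v) < \int_{\mathbb{R}^d} v(x)\,dx\). -/

import Mathlib

open MeasureTheory Filter

/-- The scattering energy functional `φ ↦ ∫ (2|∇φ|² + v|1-φ|²)`. -/
noncomputable def scatteringEnergy (d : ℕ) (v : EuclideanSpace ℝ (Fin d) → ℝ)
    (φ : EuclideanSpace ℝ (Fin d) → ℝ) : ℝ :=
  ∫ x, (2 * ‖gradient φ x‖ ^ 2 + v x * (1 - φ x) ^ 2)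

/-- The zero-scattering energy `b(v)`. -/
noncomputable def scatteringB (d : ℕ) (v : EuclideanSpace ℝ (Fin d) → ℝ) : ℝ :=
  sInf { e : ℝ | ∃ φ : EuclideanSpace ℝ (Fin d) → ℝ, Differentiable ℝ φ ∧
    Tendsto φ (cocompact _) (nhds 0) ∧
    Integrable (fun x => ‖gradient φ x‖ ^ 2) ∧
    e = scatteringEnergy d v φ }

/-! Since `v` lives on a compact set, take a smooth compactly supported cutoff `ψ` equal to `1`
on `supp v` and test the energy with `ε ψ`. This gives `2 ε² ∫ |∇ψ|² + (1 - ε)² ∫ v`, whose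
derivative at `ε = 0` is `-2 ∫ v < 0`, so small `ε > 0` beats the trivial trial function `φ = 0`,
whose energy is `∫ v`. -/

theorem HasCompactSupport.integrable_of_bound {X F : Type*} [TopologicalSpace X]
    [MeasurableSpace X] [OpensMeasurableSpace X] {μ : Measure X} [IsFiniteMeasureOnCompacts μ]
    [NormedAddCommGroup F] {f : X → F} (hsupp : HasCompactSupport f)
    (hf : AEStronglyMeasurable f μ) {C : ℝ} (hC : ∀ x, ‖f x‖ ≤ C) : Integrable f μ :=
  (integrableOn_iff_integrable_of_support_subset (subset_tsupport f)).1 <|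
    Measure.integrableOn_of_bounded hsupp.isCompact.measure_lt_top.ne hf (ae_of_all _ hC)

theorem Bornology.IsBounded.exists_contDiffBump_eq_one {E : Type*} [NormedAddCommGroup E]
    [NormedSpace ℝ E] [HasContDiffBump E] {s : Set E} (hs : Bornology.IsBounded s) :
    ∃ ψ : ContDiffBump (0 : E), ∀ x ∈ s, ψ x = 1 := by
  obtain ⟨R, hR⟩ := hs.subset_closedBall 0
  refine ⟨⟨max R 1, max R 1 + 1, by positivity, lt_add_one _⟩, fun x hx => ?_⟩
  exact ContDiffBump.one_of_mem_closedBall _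
    (Metric.closedBall_subset_closedBall (le_max_left R 1) (hR hx))

section Gradient

variable {E : Type*} [NormedAddCommGroup E] [InnerProductSpace ℝ E] [CompleteSpace E]

theorem gradient_const_smul (c : ℝ) (f : E → ℝ) : gradient (c • f) = c • gradient f := by
  ext1 x
  simp only [gradient, fderiv_const_smul_field, Pi.smul_apply, map_smul]

theorem ContDiff.continuous_gradient {f : E → ℝ} (hf : ContDiff ℝ 1 f) :
    Continuous (gradient f) :=
  (InnerProductSpace.toDual ℝ E).symm.continuous.comp (hf.continuous_fderiv one_ne_zero)

theorem HasCompactSupport.gradient {f : E → ℝ} (hf : HasCompactSupport f) :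
    HasCompactSupport (gradient f) :=
  hf.fderiv (𝕜 := ℝ) |>.comp_left (map_zero _)

theorem ContDiff.integrable_norm_gradient_sq [MeasurableSpace E] [OpensMeasurableSpace E]
    {μ : Measure E} [IsFiniteMeasureOnCompacts μ] {f : E → ℝ} (hf : ContDiff ℝ 1 f)
    (hsupp : HasCompactSupport f) : Integrable (fun x => ‖gradient f x‖ ^ 2) μ := by
  have hsupp' : HasCompactSupport fun x => ‖gradient f x‖ ^ 2 :=
    hsupp.gradient.comp_left (g := fun y : E => ‖y‖ ^ 2) (by simp)
  exact (hf.continuous_gradient.norm.pow 2).integrable_of_hasCompactSupport hsupp'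

end Gradient

section ScatteringEnergy

variable {d : ℕ} {v : EuclideanSpace ℝ (Fin d) → ℝ}

theorem scatteringB_le_scatteringEnergy (hv : ∀ x, 0 ≤ v x)
    {φ : EuclideanSpace ℝ (Fin d) → ℝ} (hφ : ContDiff ℝ 1 φ) (hsupp : HasCompactSupport φ) :
    scatteringB d v ≤ scatteringEnergy d v φ := by
  refine csInf_le ⟨0, ?_⟩ ⟨φ, hφ.differentiable one_ne_zero, hsupp.is_zero_at_infty,
    hφ.integrable_norm_gradient_sq hsupp, rfl⟩
  rintro _ ⟨ψ, -, -, -, rfl⟩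
  exact integral_nonneg fun x => add_nonneg (by positivity) (mul_nonneg (hv x) (sq_nonneg _))

theorem scatteringEnergy_smul_of_eq_one (hv : Integrable v)
    {ψ : EuclideanSpace ℝ (Fin d) → ℝ} (hψ : Integrable fun x => ‖gradient ψ x‖ ^ 2)
    (hψv : ∀ x ∈ Function.support v, ψ x = 1) (ε : ℝ) :
    scatteringEnergy d v (ε • ψ) =
      2 * ε ^ 2 * (∫ x, ‖gradient ψ x‖ ^ 2) + (1 - ε) ^ 2 * ∫ x, v x := by
  have hpointwise : ∀ x, 2 * ‖gradient (ε • ψ) x‖ ^ 2 + v x * (1 - (ε • ψ) x) ^ 2 =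
      2 * ε ^ 2 * ‖gradient ψ x‖ ^ 2 + (1 - ε) ^ 2 * v x := by
    intro x
    rw [gradient_const_smul, Pi.smul_apply, norm_smul, Real.norm_eq_abs, mul_pow, sq_abs,
      Pi.smul_apply, smul_eq_mul]
    by_cases hx : v x = 0
    · rw [hx]; ring
    · rw [hψv x hx]; ring
  simp only [scatteringEnergy, hpointwise]
  rw [integral_add (hψ.const_mul _) (hv.const_mul _), integral_const_mul, integral_const_mul]

end ScatteringEnergy

theorem scatteringB_lt_integral_general (d : ℕ)
    (v : EuclideanSpace ℝ (Fin d) → ℝ) (hv_nonneg : ∀ x, 0 ≤ v x)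
    (hv_meas : Measurable v) (hv_bdd : ∃ C, ∀ x, v x ≤ C)
    (hv_supp : HasCompactSupport v)
    (hv_ne : ¬ (v =ᵐ[volume] (fun _ => (0 : ℝ)))) :
    scatteringB d v < ∫ x, v x := by
  obtain ⟨C, hC⟩ := hv_bdd
  have hv_int : Integrable v := hv_supp.integrable_of_bound hv_meas.aestronglyMeasurable
    fun x => by rw [Real.norm_of_nonneg (hv_nonneg x)]; exact hC x
  have hA : 0 < ∫ x, v x := (integral_nonneg hv_nonneg).lt_of_ne'
    (mt (integral_eq_zero_iff_of_nonneg hv_nonneg hv_int).1 hv_ne)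
  obtain ⟨ψ, hψv⟩ := hv_supp.isCompact.isBounded.exists_contDiffBump_eq_one
  have hψ : ContDiff ℝ 1 ψ := ψ.contDiff
  set A := ∫ x, v x
  set G := ∫ x, ‖gradient ψ x‖ ^ 2
  have hG : 0 ≤ G := integral_nonneg fun x => by positivity
  -- With this `ε`, the energy of `ε ψ` equals `A - ε A`.
  set ε := A / (A + 2 * G)
  have hε : 0 < ε := by positivity
  have hεA : ε * (A + 2 * G) = A := div_mul_cancel₀ _ (by positivity)
  calc scatteringB d v ≤ scatteringEnergy d v (ε • ψ) :=
        scatteringB_le_scatteringEnergy hv_nonneg (hψ.const_smul ε) ψ.hasCompactSupport.smul_left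
    _ = 2 * ε ^ 2 * G + (1 - ε) ^ 2 * A := scatteringEnergy_smul_of_eq_one hv_int
        (hψ.integrable_norm_gradient_sq ψ.hasCompactSupport)
        (fun x hx => hψv x (subset_tsupport v hx)) ε
    _ < A := by nlinarith [mul_pos hε hA]

/-- For `d ≥ 3` and `v` nonnegative, bounded, measurable, compactly supported and not
a.e. zero, the scattering energy is strictly smaller than `∫ v`. -/
theorem scatteringB_lt_integral (d : ℕ) (hd : 3 ≤ d)
    (v : EuclideanSpace ℝ (Fin d) → ℝ) (hv_nonneg : ∀ x, 0 ≤ v x)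
    (hv_meas : Measurable v) (hv_bdd : ∃ C, ∀ x, v x ≤ C)
    (hv_supp : HasCompactSupport v)
    (hv_ne : ¬ (v =ᵐ[volume] (fun _ => (0 : ℝ)))) :
    scatteringB d v < ∫ x, v x :=
  scatteringB_lt_integral_general d v hv_nonneg hv_meas hv_bdd hv_supp hv_ne
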